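/- Let Π be a normal logic program and D_Π its defeasible theory translation. A set M ⊆ At(Π) is a stable model of Π iff M^¬ is an α-stable set of D_Π, where M^¬ = M ∪ {¬p : p ∈ At(Π), p ∉ M}. -/

import Mathlib

namespace DLWFS

universe u

/-- Ground literals over a type `A` of atoms: atoms and their classical complements. -/
inductive Lit (A : Type u) : Type u where
  | pos : A → Lit A
  | neg : A → Lit A

/-- The classical complement `p̄` of a literal `p`. -/
def Lit.compl {A : Type u} : Lit A → Lit A
  | .pos a => .neg a
  | .neg a => .pos a

/-- The three kinds of rules of a defeasible theory. -/
inductive RuleKind : Type where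
  | strict
  | defeasible
  | defeater
deriving DecidableEq

/-- A rule of a defeasible theory: a kind, a body (a set of literals) and a head literal. -/
structure DRule (A : Type u) where
  kind : RuleKind
  body : Set (Lit A)
  head : Lit A

/-- A defeasible theory `D = ⟨R, C, ≺⟩`. -/
structure DTheory (A : Type u) where
  rules : Set (DRule A)
  conflicts : Set (Set (Lit A))
  prec : DRule A → DRule A → Prop

namespace DTheory

variable {A : Type u}

/-- The strict rules `R_s`. -/
def Rs (D : DTheory A) : Set (DRule A) := {r ∈ D.rules | r.kind = RuleKind.strict}

/-- The defeasible rules `R_d`. -/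
def Rd (D : DTheory A) : Set (DRule A) := {r ∈ D.rules | r.kind = RuleKind.defeasible}

/-- The defeater rules `R_u`. -/
def Ru (D : DTheory A) : Set (DRule A) := {r ∈ D.rules | r.kind = RuleKind.defeater}

/-- `C[p]`: the conflict sets containing literal `p`. -/
def Cset (D : DTheory A) (p : Lit A) : Set (Set (Lit A)) := {c ∈ D.conflicts | p ∈ c}

/-- Structural conditions in the definition of a defeasible theory: a countable set of
rules with finite bodies, a countable set of finite conflict sets containing every
minimal conflict set `{p, ¬p}`, and an acyclic priority relation over non-strict rules. -/
def WellFormed (D : DTheory A) : Prop :=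
  D.rules.Countable ∧ D.conflicts.Countable ∧
  (∀ r ∈ D.rules, r.body.Finite) ∧
  (∀ c ∈ D.conflicts, c.Finite) ∧
  (∀ p : A, ({Lit.pos p, Lit.neg p} : Set (Lit A)) ∈ D.conflicts) ∧
  (∀ r s, D.prec r s → r.kind ≠ RuleKind.strict ∧ s.kind ≠ RuleKind.strict) ∧
  (∀ r, ¬ Relation.TransGen D.prec r r)

/-- `C = C_MIN`: the conflict sets are exactly the minimal ones `{p, ¬p}`. -/
def MinimalConflicts (D : DTheory A) : Prop :=
  D.conflicts = {c | ∃ p : A, c = ({Lit.pos p, Lit.neg p} : Set (Lit A))}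

end DTheory

/-- A 3-valued interpretation: a pair `⟨T, F⟩` of sets. -/
abbrev Interp (L : Type u) : Type u := Set L × Set L

variable {A : Type u}

/-- `S` is ADL-unfounded with respect to theory `D` and interpretation `I = ⟨T, F⟩`. -/
def ADLUnfounded (D : DTheory A) (I : Interp (Lit A)) (S : Set (Lit A)) : Prop :=
  ∀ p ∈ S,
    (∀ r ∈ D.Rs, r.head = p → (r.body ∩ (I.2 ∪ S)).Nonempty) ∧
    (∀ r ∈ D.Rd, r.head = p →
      (r.body ∩ (I.2 ∪ S)).Nonempty ∨
      ∃ c ∈ D.conflicts, p ∈ c ∧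
        ∀ q ∈ c \ {p}, ∃ s ∈ D.rules, s.head = q ∧ s.body ⊆ I.1 ∧
          (D.prec r s ∨ s.kind = RuleKind.strict))

/-- `S` is NDL-unfounded with respect to theory `D` and interpretation `I = ⟨T, F⟩`. -/
def NDLUnfounded (D : DTheory A) (I : Interp (Lit A)) (S : Set (Lit A)) : Prop :=
  ∀ p ∈ S,
    (∀ r ∈ D.Rs, r.head = p → (r.body ∩ (I.2 ∪ S)).Nonempty) ∧
    (∀ r ∈ D.Rd, r.head = p →
      (r.body ∩ (I.2 ∪ S)).Nonempty ∨
      ∃ c ∈ D.conflicts, p ∈ c ∧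
        ∀ q ∈ c \ {p}, ∃ s ∈ D.rules, s.head = q ∧ s.body ⊆ I.1 ∧
          ¬ D.prec s r)

/-- `U_D(I)` for ADL: the union of all ADL-unfounded sets. -/
def UA (D : DTheory A) (I : Interp (Lit A)) : Set (Lit A) :=
  ⋃₀ {S | ADLUnfounded D I S}

/-- `U_D(I)` for NDL: the union of all NDL-unfounded sets. -/
def UN (D : DTheory A) (I : Interp (Lit A)) : Set (Lit A) :=
  ⋃₀ {S | NDLUnfounded D I S}

/-- `T_D(I)`: the literals having a witness of provability with respect to `I = ⟨T, F⟩`. -/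
def TD (D : DTheory A) (I : Interp (Lit A)) : Set (Lit A) :=
  {p | ∃ r ∈ D.rules, r.head = p ∧ r.body ⊆ I.1 ∧
    (r.kind = RuleKind.strict ∨
      (r.kind = RuleKind.defeasible ∧
        ∀ c ∈ D.conflicts, p ∈ c →
          ∃ q ∈ c \ {p}, ∀ s ∈ D.rules, s.head = q →
            (D.prec s r ∨ (s.body ∩ I.2).Nonempty)))}

/-- `W_D` for ADL. -/
def WA (D : DTheory A) (I : Interp (Lit A)) : Interp (Lit A) := (TD D I, UA D I)

/-- `W_D` for NDL. -/
def WN (D : DTheory A) (I : Interp (Lit A)) : Interp (Lit A) := (TD D I, UN D I)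

/-- `I` is the well-founded model for the operator `W`: the least fixpoint of `W`
(componentwise order). -/
def IsWFModel {L : Type u} (W : Interp L → Interp L) (I : Interp L) : Prop :=
  W I = I ∧ ∀ J, W J = J → I.1 ⊆ J.1 ∧ I.2 ⊆ J.2

/-- A rule of a normal logic program: `head ← pos, ∼neg`. -/
structure NRule (A : Type u) where
  head : A
  pos : Set A
  neg : Set A

/-- A normal logic program: a set of rules. -/
abbrev NProgram (A : Type u) : Type u := Set (NRule A)

/-- Structural conditions in the definition of a normal logic program: a countable
set of ground rules with finite bodies. -/
def NProgram.WellFormed (P : NProgram A) : Prop :=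
  P.Countable ∧ ∀ r ∈ P, r.pos.Finite ∧ r.neg.Finite

/-- The immediate consequence operator `T_Π` on 3-valued interpretations. -/
def TP (P : NProgram A) (I : Interp A) : Set A :=
  {a | ∃ r ∈ P, r.head = a ∧ r.pos ⊆ I.1 ∧ r.neg ⊆ I.2}

/-- `S` is an unfounded set of program `P` with respect to interpretation `I = ⟨T, F⟩`. -/
def PUnfounded (P : NProgram A) (I : Interp A) (S : Set A) : Prop :=
  ∀ p ∈ S, ∀ r ∈ P, r.head = p →
    (r.pos ∩ (I.2 ∪ S)).Nonempty ∨ (r.neg ∩ I.1).Nonempty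

/-- `U_Π(I)`: the greatest unfounded set (union of all unfounded sets). -/
def UP (P : NProgram A) (I : Interp A) : Set A :=
  ⋃₀ {S | PUnfounded P I S}

/-- `W_Π(I) = ⟨T_Π(I), U_Π(I)⟩`. -/
def WP (P : NProgram A) (I : Interp A) : Interp A := (TP P I, UP P I)

/-- Transfinite iteration of an operator `W` from `⊥`, taking suprema at limit ordinals. -/
noncomputable def iterW {α : Type*} [CompleteLattice α] (W : α → α) : Ordinal.{0} → α :=
  fun o =>
    Ordinal.limitRecOn (motive := fun _ => α) o ⊥ (fun _ ih => W ih)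
      (fun o' _ ih => ⨆ x : Set.Iio o', ih x.1 x.2)

/-- One step of the immediate consequence operator for a set of defeasible-theory rules. -/
def TRstep (R : Set (DRule A)) (S : Set (Lit A)) : Set (Lit A) :=
  {p | ∃ r ∈ R, r.head = p ∧ r.body ⊆ S}

/-- The finite iterates `T_R ↑ n`. -/
def TRiter (R : Set (DRule A)) : ℕ → Set (Lit A)
  | 0 => ∅
  | n + 1 => TRstep R (TRiter R n)

/-- `Cl(R) = T_R ↑ ω`. -/
def ClR (R : Set (DRule A)) : Set (Lit A) := ⋃ n, TRiter R n

/-- The `α`-reduct `D_α^S` of a defeasible theory. -/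
def alphaReduct (D : DTheory A) (S : Set (Lit A)) : Set (DRule A) :=
  D.Rs ∪ {r ∈ D.Rd | ∀ c ∈ D.conflicts, r.head ∈ c → ∃ q ∈ c \ {r.head}, q ∉ S}

/-- The ambiguity-propagating operator `α_D(S) = Cl(D_α^S)`. -/
def alphaOp (D : DTheory A) (S : Set (Lit A)) : Set (Lit A) := ClR (alphaReduct D S)

/-- The `β`-reduct `D_β^S` of a defeasible theory. -/
def betaReduct (D : DTheory A) (S : Set (Lit A)) : Set (DRule A) :=
  D.Rs ∪ {r ∈ D.Rd | ∀ c ∈ D.conflicts, r.head ∈ c →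
    ∃ q ∈ c \ {r.head}, ∀ s ∈ D.rules, s.head = q → (¬ s.body ⊆ S ∨ D.prec s r)}

/-- The ambiguity-blocking operator `β_D(S) = Cl(D_β^S)`. -/
def betaOp (D : DTheory A) (S : Set (Lit A)) : Set (Lit A) := ClR (betaReduct D S)

/-- `S` is an `α`-stable set of `D`. -/
def AlphaStable (D : DTheory A) (S : Set (Lit A)) : Prop := alphaOp D S = S

/-- `S` is a `β`-stable set of `D`. -/
def BetaStable (D : DTheory A) (S : Set (Lit A)) : Prop := betaOp D S = S

/-- The sequence `X_D↑λ`: `X↑0 = ∅`, `X↑(λ+1) = β_D(β_D(X↑λ))`, unions at limits. -/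
noncomputable def Xseq (D : DTheory A) : Ordinal.{0} → Set (Lit A) :=
  iterW (fun S => betaOp D (betaOp D S))

/-- The Gelfond–Lifschitz reduct `Π^S`. -/
def glReduct (P : NProgram A) (S : Set A) : NProgram A :=
  {r' | ∃ r ∈ P, r.neg ∩ S = ∅ ∧ r' = NRule.mk r.head r.pos ∅}

/-- One step of the immediate consequence operator for a NAF-free program. -/
def TPstep (P : NProgram A) (S : Set A) : Set A :=
  {a | ∃ r ∈ P, r.head = a ∧ r.pos ⊆ S}

/-- The finite iterates `T_Π ↑ n` of a NAF-free program. -/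
def TPiter (P : NProgram A) : ℕ → Set A
  | 0 => ∅
  | n + 1 => TPstep P (TPiter P n)

/-- `Cl(Π) = T_Π ↑ ω`. -/
def ClP (P : NProgram A) : Set A := ⋃ n, TPiter P n

/-- The Gelfond–Lifschitz operator `γ_Π(S) = Cl(Π^S)`. -/
def gamma (P : NProgram A) (S : Set A) : Set A := ClP (glReduct P S)

/-- `S` is a stable model of `P`. -/
def StableModel (P : NProgram A) (S : Set A) : Prop := gamma P S = S

/-- `Prod(C[p])`: all sets obtained by choosing one literal other than `p` from each
conflict set containing `p`. -/
def ProdC (D : DTheory A) (p : Lit A) : Set (Set (Lit A)) :=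
  {Q | ∃ f : Set (Lit A) → Lit A,
    (∀ c ∈ D.conflicts, p ∈ c → f c ∈ c \ {p}) ∧
    Q = f '' {c ∈ D.conflicts | p ∈ c}}

/-- The logic program translation `Π_D` of a defeasible theory `D` (negative literals
are treated as fresh atoms, so the atoms of the program are the literals of `D`). -/
def lpTrans (D : DTheory A) : NProgram (Lit A) :=
  {r' | ∃ r ∈ D.Rs, r' = NRule.mk r.head r.body ∅} ∪
  {r' | ∃ r ∈ D.Rd, ∃ Q ∈ ProdC D r.head, r' = NRule.mk r.head r.body Q}

/-- The explicit version `Φ` of a normal program `Π`: atoms of `Φ` are the literals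
over the atoms of `Π` (`¬p` being a fresh atom). -/
def explicitVer (P : NProgram A) : NProgram (Lit A) :=
  {r' | ∃ r ∈ P, r' = NRule.mk (Lit.pos r.head) (Lit.pos '' r.pos ∪ Lit.neg '' r.neg) ∅} ∪
  {r' | ∃ p : A, r' = NRule.mk (Lit.neg p) ∅ {Lit.pos p}}

/-- The minimal conflict sets over atom type `A`. -/
def CMin (A : Type u) : Set (Set (Lit A)) :=
  {c | ∃ p : A, c = ({Lit.pos p, Lit.neg p} : Set (Lit A))}

/-- The defeasible theory translation `D_Π` of a normal program `Π`: each program rule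
becomes a strict rule (default literals `∼b` becoming negative literals `¬b`), and each
atom `p` yields a presumption `∅ ⇒ ¬p`; conflict sets are minimal and `≺` is empty. -/
def dtTrans (P : NProgram A) : DTheory A :=
  { rules :=
      {e | ∃ r ∈ P, e = DRule.mk RuleKind.strict
            (Lit.pos '' r.pos ∪ Lit.neg '' r.neg) (Lit.pos r.head)} ∪
      {e | ∃ p : A, e = DRule.mk RuleKind.defeasible ∅ (Lit.neg p)}
    conflicts := CMin A
    prec := fun _ _ => False }

/-- `M^¬ = M ∪ {¬p : p ∉ M}`, atoms being identified with positive literals. -/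
def negCompl (M : Set A) : Set (Lit A) :=
  Lit.pos '' M ∪ Lit.neg '' {p | p ∉ M}

end DLWFS

/-!
Write `⟨T, F⟩` for the set of literals `T ∪ ¬F`, so that `M^¬ = ⟨M, Mᶜ⟩`. In the α-reduct of
`D_Π` at `M^¬` every strict rule survives, and the presumption `∅ ⇒ ¬p` survives exactly when
`p ∉ M`. Hence one step of the reduct's consequence operator maps `⟨X, Mᶜ⟩` to
`⟨T_{Π^M}(X), Mᶜ⟩`: a translated rule fires iff its positive body lies in `X` and its negative
body avoids `M`, i.e. iff its Gelfond–Lifschitz reduct fires on `X`. The iterates from `∅` on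
both sides therefore interleave, giving `α(M^¬) = ⟨γ(M), Mᶜ⟩`, which equals `⟨M, Mᶜ⟩` iff
`γ(M) = M`.
-/

namespace DLWFS

section Closure

variable {A : Type*}

theorem TRiter_eq_iterate (R : Set (DRule A)) (n : ℕ) : TRiter R n = (TRstep R)^[n] ∅ := by
  induction n with
  | zero => rfl
  | succ n ih => rw [Function.iterate_succ_apply', ← ih]; rfl

theorem TPiter_eq_iterate (P : NProgram A) (n : ℕ) : TPiter P n = (TPstep P)^[n] ∅ := by
  induction n with
  | zero => rfl
  | succ n ih => rw [Function.iterate_succ_apply', ← ih]; rfl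

theorem TRstep_mono (R : Set (DRule A)) : Monotone (TRstep R) :=
  fun _ _ h _ ⟨r, hr, hhead, hbody⟩ => ⟨r, hr, hhead, hbody.trans h⟩

end Closure

theorem iSup_iterate_bot_eq_of_semiconj {α β : Type*} [CompleteLattice α] {F : α → α}
    {G : β → β} {φ : β → α} {b : β} (hF : Monotone F) (hφ : Function.Semiconj φ G F)
    (hb : φ b ≤ F ⊥) : ⨆ n, F^[n] ⊥ = ⨆ n, φ (G^[n] b) := by
  have hiter (n : ℕ) : φ (G^[n] b) = F^[n] (φ b) := (hφ.iterate_right n).eq b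
  apply le_antisymm
  · refine iSup_mono fun n => ?_
    rw [hiter]
    exact hF.iterate n bot_le
  · refine iSup_le fun n => le_iSup_of_le (n + 1) ?_
    rw [hiter, Function.iterate_succ_apply]
    exact hF.iterate n hb

namespace Lit

variable {A : Type*}

def ofSets (T F : Set A) : Set (Lit A) := pos '' T ∪ neg '' F

@[simp] theorem pos_mem_ofSets {T F : Set A} {a : A} : pos a ∈ ofSets T F ↔ a ∈ T := by
  simp [ofSets]

@[simp] theorem neg_mem_ofSets {T F : Set A} {a : A} : neg a ∈ ofSets T F ↔ a ∈ F := by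
  simp [ofSets]

theorem ofSets_subset_ofSets_iff {T F T' F' : Set A} :
    ofSets T F ⊆ ofSets T' F' ↔ T ⊆ T' ∧ F ⊆ F' := by
  refine ⟨fun h => ⟨fun a ha => ?_, fun a ha => ?_⟩, fun ⟨hT, hF⟩ => ?_⟩
  · simpa using h (pos_mem_ofSets.mpr ha)
  · simpa using h (neg_mem_ofSets.mpr ha)
  · rintro (l | l) hl <;> simp_all [Set.subset_def]

theorem ofSets_inj {T F T' F' : Set A} : ofSets T F = ofSets T' F' ↔ T = T' ∧ F = F' := by
  simp only [Set.Subset.antisymm_iff, ofSets_subset_ofSets_iff]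
  tauto

theorem iUnion_ofSets {ι : Sort*} [Nonempty ι] (T : ι → Set A) (F : Set A) :
    ⋃ i, ofSets (T i) F = ofSets (⋃ i, T i) F := by
  simp only [ofSets, Set.image_iUnion, Set.iUnion_union]

end Lit

section Translation

variable {A : Type*}

open Lit

theorem negCompl_eq_ofSets (M : Set A) : negCompl M = ofSets M Mᶜ := rfl

-- `{p, ¬p}` is the only conflict set containing `¬p`.
theorem mem_alphaReduct_dtTrans {P : NProgram A} {M : Set A} {e : DRule A} :
    e ∈ alphaReduct (dtTrans P) (negCompl M) ↔
      (∃ r ∈ P, e = ⟨.strict, ofSets r.pos r.neg, pos r.head⟩) ∨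
        ∃ p ∉ M, e = ⟨.defeasible, ∅, neg p⟩ := by
  simp only [alphaReduct, DTheory.Rs, DTheory.Rd, dtTrans, CMin]
  constructor
  · rintro (⟨⟨r, hr, rfl⟩ | ⟨p, rfl⟩, hk⟩ | ⟨⟨⟨r, hr, rfl⟩ | ⟨p, rfl⟩, hk⟩, hsurvive⟩)
    · exact .inl ⟨r, hr, rfl⟩
    · cases hk
    · cases hk
    · refine .inr ⟨p, fun hp => ?_, rfl⟩
      obtain ⟨q, hq, hqS⟩ := hsurvive _ ⟨p, rfl⟩ (by simp)
      simp_all [negCompl_eq_ofSets]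
  · rintro (⟨r, hr, rfl⟩ | ⟨p, hp, rfl⟩)
    · exact .inl ⟨.inl ⟨r, hr, rfl⟩, rfl⟩
    · refine .inr ⟨⟨.inr ⟨p, rfl⟩, rfl⟩, ?_⟩
      rintro _ ⟨q, rfl⟩ hmem
      obtain rfl : p = q := by simpa using hmem
      exact ⟨pos p, by simp, by simpa [negCompl_eq_ofSets]⟩

theorem TRstep_alphaReduct_dtTrans (P : NProgram A) (M X : Set A) :
    TRstep (alphaReduct (dtTrans P) (negCompl M)) (ofSets X Mᶜ) =
      ofSets (TPstep (glReduct P M) X) Mᶜ := by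
  have hdisj {r : NRule A} : r.neg ∩ M = ∅ ↔ r.neg ⊆ Mᶜ := by
    rw [← Set.disjoint_iff_inter_eq_empty, Set.subset_compl_iff_disjoint_right]
  ext (a | a)
  · simp only [TRstep, TPstep, glReduct, pos_mem_ofSets, mem_alphaReduct_dtTrans]
    constructor
    · rintro ⟨_, ⟨r, hr, rfl⟩ | ⟨p, -, rfl⟩, hhead, hbody⟩
      · obtain ⟨hpos, hneg⟩ := ofSets_subset_ofSets_iff.mp hbody
        exact ⟨_, ⟨r, hr, hdisj.mpr hneg, rfl⟩, pos.inj hhead, hpos⟩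
      · cases hhead
    · rintro ⟨_, ⟨r, hr, hneg, rfl⟩, rfl, hpos⟩
      exact ⟨_, .inl ⟨r, hr, rfl⟩, rfl, ofSets_subset_ofSets_iff.mpr ⟨hpos, hdisj.mp hneg⟩⟩
  · simp only [TRstep, neg_mem_ofSets, mem_alphaReduct_dtTrans]
    constructor
    · rintro ⟨_, ⟨r, -, rfl⟩ | ⟨p, hp, rfl⟩, hhead, -⟩
      · cases hhead
      · rwa [← neg.inj hhead]
    · exact fun ha => ⟨_, .inr ⟨a, ha, rfl⟩, rfl, Set.empty_subset _⟩

theorem alphaOp_dtTrans (P : NProgram A) (M : Set A) :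
    alphaOp (dtTrans P) (negCompl M) = ofSets (gamma P M) Mᶜ := by
  have hbot : ofSets ∅ Mᶜ ⊆ TRstep (alphaReduct (dtTrans P) (negCompl M)) ∅ := by
    rintro (a | a) ha
    · simp at ha
    · exact ⟨_, mem_alphaReduct_dtTrans.mpr (.inr ⟨a, neg_mem_ofSets.mp ha, rfl⟩), rfl,
        Set.empty_subset _⟩
  calc alphaOp (dtTrans P) (negCompl M)
      = ⋃ n, ofSets ((TPstep (glReduct P M))^[n] ∅) Mᶜ := by
        simp only [alphaOp, ClR, TRiter_eq_iterate]
        exact iSup_iterate_bot_eq_of_semiconj (φ := fun X => ofSets X Mᶜ) (TRstep_mono _)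
          (fun X => (TRstep_alphaReduct_dtTrans P M X).symm) hbot
    _ = ofSets (gamma P M) Mᶜ := by
        simp only [iUnion_ofSets, gamma, ClP, TPiter_eq_iterate]

end Translation

theorem dtTrans_stable_models_general {A : Type*} (P : NProgram A) :
    ∀ M : Set A, StableModel P M ↔ AlphaStable (dtTrans P) (negCompl M) := by
  intro M
  rw [AlphaStable, alphaOp_dtTrans, negCompl_eq_ofSets, Lit.ofSets_inj, and_iff_left rfl]
  rfl

/-- Let `Π` be a normal program and `D_Π` its defeasible theory translation. A set
`M ⊆ At(Π)` is a stable model of `Π` iff `M^¬ = M ∪ {¬p : p ∉ M}` is an `α`-stable set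
of `D_Π`. -/
theorem dtTrans_stable_models {A : Type*} (P : NProgram A) (hwf : P.WellFormed) :
    ∀ M : Set A, StableModel P M ↔ AlphaStable (dtTrans P) (negCompl M) :=
  dtTrans_stable_models_general P

end DLWFS
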